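/- Let ψ : F → ℂ* be a nontrivial additive character of a nonarchimedean local field F and let X = ℓ(x) be indexed by 0 ≠ x ∈ F^{n-1}. Consider the action of u ∈ F^{n-1} (identified with the top-right column unipotent subgroup U_{n-1,1}) on functions f : F^{n-1}∖{0} → V by (u·f)(x) = ψ(x·u) f(x), where x·u is the dot product. Then the coinvariants of the space S of locally constant compactly supported V-valued functions on F^{n-1}∖{0} under this action are zero: S(U) = S, i.e., for every f ∈ S there is a compact open subgroup N ⊂ F^{n-1} with ∫_N ψ(x·u) du = 0 for every x in the support of f. -/

import Mathlib

/-- Locally constant compactly supported `V`-valued functions on `F^m ∖ {0}` (viewed as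
functions on `F^m` vanishing near `0`). -/
def IsSchwartzAwayZero {F V : Type*} [Field F] [TopologicalSpace F]
    [AddCommGroup V] [Module ℂ V] {m : ℕ} (f : (Fin m → F) → V) : Prop :=
  IsLocallyConstant f ∧ HasCompactSupport f ∧ ∀ᶠ x in nhds (0 : Fin m → F), f x = 0

/-!
The character `x ↦ ψ(x ⬝ᵥ u)` is locally constant, since a continuous character of a locally
compact totally disconnected group is trivial on an open subgroup (van Dantzig, plus the absence
of small subgroups in `ℂ`). If `χ = ψ(· ⬝ᵥ u)` then `χ • h - h = 1_{χ ≠ 1} • f` for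
`h = (χ - 1)⁻¹ • f`, so every Schwartz function supported in `{χ ≠ 1}` is a coinvariant
relation. Since `u ↦ x ⬝ᵥ u` is onto `F` for `x ≠ 0`, the open sets `{ψ(· ⬝ᵥ u) ≠ 1}` cover
`F^m ∖ {0}`; finitely many of them cover the compact support of `f`, and peeling them off one at
a time writes `f` as a sum of such relations.
-/

open Filter Topology

theorem Complex.eq_one_of_forall_norm_pow_sub_one_lt_half {z : ℂ}
    (h : ∀ k : ℕ, ‖z ^ k - 1‖ < 1 / 2) : z = 1 := by
  -- `s = ∑_{k<N} zᵏ` is close to `N`, while `s * (z - 1) = z ^ N - 1` stays small.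
  have hN : ∀ N : ℕ, N * ‖z - 1‖ < 1 := by
    intro N
    set s := ∑ k ∈ Finset.range N, z ^ k
    have hsN : ‖(N : ℂ) - s‖ ≤ N / 2 :=
      calc ‖(N : ℂ) - s‖ = ‖∑ k ∈ Finset.range N, (1 - z ^ k)‖ := by
            simp [s, Finset.sum_sub_distrib]
        _ ≤ ∑ k ∈ Finset.range N, ‖1 - z ^ k‖ := norm_sum_le _ _
        _ ≤ ∑ _k ∈ Finset.range N, (1 / 2 : ℝ) :=
            Finset.sum_le_sum fun k _ => norm_sub_rev (z ^ k) 1 ▸ (h k).le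
        _ = N / 2 := by rw [Finset.sum_const, Finset.card_range, nsmul_eq_mul]; ring
    have hs : (N : ℝ) / 2 ≤ ‖s‖ := by
      have := norm_sub_norm_le (N : ℂ) ((N : ℂ) - s)
      rw [sub_sub_cancel, Complex.norm_natCast] at this
      linarith
    have hsz : ‖s‖ * ‖z - 1‖ < 1 / 2 := by
      rw [← norm_mul, geom_sum_mul]
      exact h N
    nlinarith [norm_nonneg (z - 1)]
  by_contra hz
  obtain ⟨N, hN'⟩ := exists_lt_nsmul (norm_pos_iff.mpr (sub_ne_zero.mpr hz)) 1
  exact (hN N).not_ge (nsmul_eq_mul N ‖z - 1‖ ▸ hN'.le)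

theorem exists_isCompact_isClopen_subset_of_mem_nhds {X : Type*} [TopologicalSpace X]
    [LocallyCompactSpace X] [T2Space X] [TotallyDisconnectedSpace X] {x : X} {W : Set X}
    (hW : W ∈ 𝓝 x) : ∃ K, IsCompact K ∧ IsClopen K ∧ x ∈ K ∧ K ⊆ W := by
  obtain ⟨s, hs, hsW, hsc⟩ := local_compact_nhds hW
  obtain ⟨K, hK, hxK, hKs⟩ := loc_compact_Haus_tot_disc_of_zero_dim.mem_nhds_iff.mp hs
  exact ⟨K, hsc.of_isClosed_subset hK.1 hKs, hK, hxK, hKs.trans hsW⟩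

section OpenSubgroup

variable {G : Type*} [Group G] [TopologicalSpace G] [IsTopologicalGroup G]

@[to_additive]
theorem exists_openSubgroup_subset_of_isCompact_isOpen {K : Set G} (hKc : IsCompact K)
    (hKo : IsOpen K) (h1K : (1 : G) ∈ K) : ∃ H : OpenSubgroup G, (H : Set G) ⊆ K := by
  obtain ⟨V, hV, hKV⟩ := compact_open_separated_mul_right hKc hKo subset_rfl
  have hS : V ∩ V⁻¹ ∈ 𝓝 (1 : G) := inter_mem hV (inv_mem_nhds_one G hV)
  have hstab : ∀ g ∈ Subgroup.closure (V ∩ V⁻¹), ∀ k ∈ K, k * g ∈ K := by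
    intro g hg
    induction hg using Subgroup.closure_induction'' with
    | mem x hx => exact fun k hk => hKV (Set.mul_mem_mul hk hx.1)
    | inv_mem x hx => exact fun k hk => hKV (Set.mul_mem_mul hk hx.2)
    | one => simp
    | mul x y _ _ hx hy => exact fun k hk => mul_assoc k x y ▸ hy _ (hx k hk)
  refine ⟨⟨Subgroup.closure (V ∩ V⁻¹), Subgroup.isOpen_of_mem_nhds _
    (mem_of_superset hS Subgroup.subset_closure)⟩, fun g hg => ?_⟩
  simpa using hstab g hg 1 h1K

@[to_additive]
theorem exists_openSubgroup_subset_of_mem_nhds_one [LocallyCompactSpace G] [T2Space G]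
    [TotallyDisconnectedSpace G] {W : Set G} (hW : W ∈ 𝓝 (1 : G)) :
    ∃ H : OpenSubgroup G, (H : Set G) ⊆ W := by
  obtain ⟨K, hKc, hK, h1K, hKW⟩ := exists_isCompact_isClopen_subset_of_mem_nhds hW
  obtain ⟨H, hH⟩ := exists_openSubgroup_subset_of_isCompact_isOpen hKc hK.2 h1K
  exact ⟨H, hH.trans hKW⟩

end OpenSubgroup

theorem AddChar.isLocallyConstant_of_continuous {G : Type*} [AddGroup G] [TopologicalSpace G]
    [IsTopologicalAddGroup G] [LocallyCompactSpace G] [T2Space G] [TotallyDisconnectedSpace G]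
    (ψ : AddChar G ℂ) (hψ : Continuous ψ) : IsLocallyConstant ψ := by
  obtain ⟨H, hH⟩ := exists_openAddSubgroup_subset_of_mem_nhds_zero
    (hψ.continuousAt.preimage_mem_nhds (Metric.ball_mem_nhds (ψ 0) one_half_pos))
  have hker : ∀ a ∈ H, ψ a = 1 := fun a ha =>
    Complex.eq_one_of_forall_norm_pow_sub_one_lt_half fun k => by
      simpa [← AddChar.map_nsmul_eq_pow, dist_eq_norm] using hH (H.nsmul_mem ha k)
  refine (IsLocallyConstant.iff_eventually_eq _).mpr fun x => ?_
  have hx : Tendsto (fun y => -x + y) (𝓝 x) (𝓝 0) :=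
    (continuous_const_add (-x)).tendsto' x 0 (neg_add_cancel x)
  filter_upwards [hx.eventually_mem (H.isOpen.mem_nhds H.zero_mem)] with y hy
  rw [← add_neg_cancel_left x y, ψ.map_add_eq_mul, hker _ hy, mul_one]

theorem exists_dotProduct_eq {K ι : Type*} [DivisionRing K] [Fintype ι] [DecidableEq ι]
    {x : ι → K} (hx : x ≠ 0) (a : K) : ∃ u, x ⬝ᵥ u = a := by
  obtain ⟨i, hi⟩ := Function.ne_iff.mp hx
  exact ⟨Pi.single i ((x i)⁻¹ * a), by rw [dotProduct_single, mul_inv_cancel_left₀ hi]⟩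

theorem IsLocallyConstant.comp_dotProduct {R ι Y : Type*} [NonUnitalNonAssocSemiring R]
    [TopologicalSpace R] [IsTopologicalSemiring R] [Fintype ι] {g : R → Y}
    (hg : IsLocallyConstant g) (u : ι → R) : IsLocallyConstant fun x : ι → R => g (x ⬝ᵥ u) :=
  hg.comp_continuous (continuous_id.dotProduct continuous_const)

section Schwartz

variable {F V : Type*} [Field F] [TopologicalSpace F] [AddCommGroup V] [Module ℂ V] {m : ℕ}

theorem IsSchwartzAwayZero.smul {φ : (Fin m → F) → ℂ} {f : (Fin m → F) → V}
    (hφ : IsLocallyConstant φ) (hf : IsSchwartzAwayZero f) :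
    IsSchwartzAwayZero fun x => φ x • f x :=
  ⟨hφ.comp₂ hf.1 _, hf.2.1.smul_left, hf.2.2.mono fun x hx => by simp [hx]⟩

variable (V) in
def twistedAugmentation (ψ : AddChar F ℂ) (m : ℕ) : Submodule ℂ ((Fin m → F) → V) :=
  Submodule.span ℂ {g | ∃ (u : Fin m → F) (h : (Fin m → F) → V),
    IsSchwartzAwayZero h ∧ g = (fun x => ψ (x ⬝ᵥ u) • h x) - h}

variable [IsTopologicalRing F] {ψ : AddChar F ℂ}

-- Since `0⁻¹ = 0`, the multiplier `(c - 1) * (c - 1)⁻¹` is the indicator of `c ≠ 1`.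
theorem smul_mem_twistedAugmentation (hψ : IsLocallyConstant ψ) (u : Fin m → F)
    {f : (Fin m → F) → V} (hf : IsSchwartzAwayZero f) :
    (fun x => ((ψ (x ⬝ᵥ u) - 1) * (ψ (x ⬝ᵥ u) - 1)⁻¹) • f x) ∈ twistedAugmentation V ψ m := by
  refine Submodule.subset_span ⟨u, fun x => (ψ (x ⬝ᵥ u) - 1)⁻¹ • f x,
    hf.smul ((hψ.comp_dotProduct u).comp fun c => (c - 1)⁻¹), ?_⟩
  ext x
  simp only [Pi.sub_apply, smul_smul, ← sub_smul, sub_mul, one_mul]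

theorem mem_twistedAugmentation_of_support_subset (hψ : IsLocallyConstant ψ)
    (s : Finset (Fin m → F)) {f : (Fin m → F) → V} (hf : IsSchwartzAwayZero f)
    (hsupp : Function.support f ⊆ ⋃ u ∈ s, {x | ψ (x ⬝ᵥ u) ≠ 1}) :
    f ∈ twistedAugmentation V ψ m := by
  classical
  induction s using Finset.induction_on generalizing f with
  | empty =>
    obtain rfl : f = 0 := Function.support_eq_empty_iff.mp (by simpa using hsupp)
    exact zero_mem _
  | insert u s _ ih =>
    set e := fun x => (ψ (x ⬝ᵥ u) - 1) * (ψ (x ⬝ᵥ u) - 1)⁻¹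
    have hsplit : f = (fun x => e x • f x) + fun x => (1 - e x) • f x := by
      ext x
      simp [← add_smul]
    have hrest : IsSchwartzAwayZero fun x => (1 - e x) • f x :=
      hf.smul ((hψ.comp_dotProduct u).comp fun c => 1 - (c - 1) * (c - 1)⁻¹)
    rw [hsplit]
    refine add_mem (smul_mem_twistedAugmentation hψ u hf) (ih hrest fun x hx => ?_)
    have hψx : ψ (x ⬝ᵥ u) = 1 := by
      by_contra hψx
      simp [e, sub_ne_zero.mpr hψx] at hx
    simpa [hψx] using hsupp (Function.support_smul_subset_right _ _ hx)

end Schwartz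

/-- The coinvariants of `S(F^{n-1} ∖ {0}, V)` under the `ψ`-twisted action
`(u · f)(x) = ψ(∑ᵢ xᵢuᵢ) • f(x)` of `U ≅ F^{n-1}` vanish: every such `f` lies in the span
of the elements `u · h − h`. -/
theorem schwartz_twisted_coinvariants_vanish {F V : Type*} [Field F] [TopologicalSpace F]
    [IsTopologicalRing F] [LocallyCompactSpace F] [TotallyDisconnectedSpace F] [T2Space F]
    [AddCommGroup V] [Module ℂ V] (n : ℕ)
    (ψ : AddChar F ℂ) (hψc : Continuous ψ) (hψ : ∃ a : F, ψ a ≠ 1) :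
    ∀ f : (Fin (n - 1) → F) → V, IsSchwartzAwayZero f →
      f ∈ Submodule.span ℂ
        {g : (Fin (n - 1) → F) → V |
          ∃ (u : Fin (n - 1) → F) (h : (Fin (n - 1) → F) → V),
            IsSchwartzAwayZero h ∧
            g = (fun x => ψ (∑ i, x i * u i) • h x) - h} := by
  intro f hf
  show f ∈ twistedAugmentation V ψ (n - 1)
  obtain ⟨a, ha⟩ := hψ
  have hψlc : IsLocallyConstant ψ := ψ.isLocallyConstant_of_continuous hψc
  have hcover : tsupport f ⊆ ⋃ u, {x | ψ (x ⬝ᵥ u) ≠ 1} := by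
    intro x hx
    have hx0 : x ≠ 0 := by
      rintro rfl
      exact notMem_tsupport_iff_eventuallyEq.mpr hf.2.2 hx
    obtain ⟨u, hu⟩ := exists_dotProduct_eq hx0 a
    exact Set.mem_iUnion.mpr ⟨u, by simpa [hu] using ha⟩
  obtain ⟨s, hs⟩ := hf.2.1.isCompact.elim_finite_subcover _
    (fun u => hψlc.comp_dotProduct u {1}ᶜ) hcover
  exact mem_twistedAugmentation_of_support_subset hψlc s hf ((subset_tsupport f).trans hs)
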